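/- arXiv:2210.08955 — 2 statements merged into one kernel-verified Lean document; each statement's English description precedes it below -/
import Mathlib

section
/- For all finite connected simple graphs G and H, each with at least two vertices, every MEG-set of the strong product G ⊠ H is also an MEG-set of the Cartesian product G □ H; in particular meg(G □ H) ≤ meg(G ⊠ H). -/
open SimpleGraph

/-- `S` is a monitoring edge-geodetic set (MEG-set) of `G`: for every edge `e` of `G`
there are `x, y ∈ S` whose distance in `G − e` differs from their distance in `G`
(including the case that they become disconnected in `G − e`). -/
def IsMEGSet {V : Type*} (G : SimpleGraph V) (S : Set V) : Prop :=
  ∀ e ∈ G.edgeSet, ∃ x ∈ S, ∃ y ∈ S,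
    ¬ (G.deleteEdges {e}).Reachable x y ∨ (G.deleteEdges {e}).dist x y ≠ G.dist x y

/-- The monitoring edge-geodetic number: the minimum cardinality of an MEG-set. -/
noncomputable def meg {V : Type*} [Fintype V] (G : SimpleGraph V) : ℕ :=
  sInf {n | ∃ S : Set V, IsMEGSet G S ∧ S.ncard = n}

/-- The strong product `G ⊠ H` of two simple graphs: `(a,b)` adjacent to `(c,d)` iff
`a = c` and `bd ∈ E(H)`, or `b = d` and `ac ∈ E(G)`, or `ac ∈ E(G)` and `bd ∈ E(H)`. -/
def strongProd {α β : Type*} (G : SimpleGraph α) (H : SimpleGraph β) :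
    SimpleGraph (α × β) where
  Adj x y := (x.1 = y.1 ∧ H.Adj x.2 y.2) ∨ (x.2 = y.2 ∧ G.Adj x.1 y.1) ∨
    (G.Adj x.1 y.1 ∧ H.Adj x.2 y.2)
  symm := ⟨fun x y => by
    rintro (⟨h1, h2⟩ | ⟨h1, h2⟩ | ⟨h1, h2⟩)
    · exact Or.inl ⟨h1.symm, h2.symm⟩
    · exact Or.inr (Or.inl ⟨h1.symm, h2.symm⟩)
    · exact Or.inr (Or.inr ⟨h1.symm, h2.symm⟩)⟩
  loopless := ⟨fun x => by
    rintro (⟨_, h⟩ | ⟨_, h⟩ | ⟨h, _⟩)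
    · exact H.loopless.irrefl _ h
    · exact G.loopless.irrefl _ h
    · exact G.loopless.irrefl _ h⟩

infixl:70 " ⊠ " => strongProd

/-!
Deleting a Cartesian edge `uv` of `G ⊠ H` changes no distance except `d(u, v)`: whenever a
walk passes `u → v → w`, the strong product offers a detour `u → z → w` with `z ∉ {u, v}`
(a diagonal edge, using that the vertices of `G` and `H` have neighbours). So a pair of an
MEG-set of `G ⊠ H` monitoring `uv` must be `{u, v}` itself, which monitors `uv` in `G □ H` too.
-/

namespace SimpleGraph

variable {V : Type*} {K : SimpleGraph V} {e : Sym2 V} {x y : V}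

def Monitors (K : SimpleGraph V) (x y : V) (e : Sym2 V) : Prop :=
  ¬ (K.deleteEdges {e}).Reachable x y ∨ (K.deleteEdges {e}).dist x y ≠ K.dist x y

lemma monitors_of_adj (h : K.Adj x y) : K.Monitors x y s(x, y) := by
  refine Or.inr fun hdist => ?_
  rw [dist_eq_one_iff_adj.2 h, dist_eq_one_iff_adj, deleteEdges_adj] at hdist
  exact hdist.2 rfl

def HasShortDetours (K : SimpleGraph V) (e : Sym2 V) : Prop :=
  ∀ ⦃a b w⦄, s(a, b) = e → K.Adj b w → ∃ q : (K.deleteEdges {e}).Walk a w, q.length ≤ 2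

lemma exists_walk_deleteEdges_length_le_two {a z w : V} (haz : K.Adj a z) (hzw : K.Adj z w)
    (hz : z ∉ e) : ∃ q : (K.deleteEdges {e}).Walk a w, q.length ≤ 2 :=
  ⟨.cons (deleteEdges_adj.2 ⟨haz, fun h => hz (h ▸ Sym2.mem_mk_right a z)⟩)
    (.cons (deleteEdges_adj.2 ⟨hzw, fun h => hz (h ▸ Sym2.mem_mk_left z w)⟩) .nil), le_rfl⟩

lemma HasShortDetours.exists_walk_length_le (hK : K.HasShortDetours e) (p : K.Walk x y)
    (hxy : s(x, y) ≠ e) : ∃ q : (K.deleteEdges {e}).Walk x y, q.length ≤ p.length := by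
  induction p with
  | nil => exact ⟨.nil, le_rfl⟩
  | @cons x x₁ y hadj p ih =>
    by_cases hlast : s(x₁, y) = e
    · cases p with
      | nil => exact ⟨.cons (deleteEdges_adj.2 ⟨hadj, hxy⟩) .nil, le_rfl⟩
      | cons _ p' =>
        obtain ⟨q, hq⟩ := hK (Sym2.eq_swap.trans hlast) hadj.symm
        exact ⟨q.reverse, by simp only [Walk.length_reverse, Walk.length_cons]; omega⟩
    obtain ⟨q, hq⟩ := ih hlast
    by_cases hfirst : s(x, x₁) = e
    · cases q with
      | nil => exact absurd hfirst hxy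
      | cons hadj' q' =>
        obtain ⟨r, hr⟩ := hK hfirst hadj'.1
        exact ⟨r.append q', by simp only [Walk.length_append, Walk.length_cons] at hq ⊢; omega⟩
    · refine ⟨.cons (deleteEdges_adj.2 ⟨hadj, hfirst⟩) q, ?_⟩
      simp only [Walk.length_cons]
      omega

lemma HasShortDetours.eq_of_monitors (hK : K.HasShortDetours e) (hxy : K.Reachable x y)
    (h : K.Monitors x y e) : s(x, y) = e := by
  by_contra hne
  obtain ⟨p, hp⟩ := hxy.exists_walk_length_eq_dist
  obtain ⟨q, hq⟩ := hK.exists_walk_length_le p hne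
  have hle : (K.deleteEdges {e}).dist x y ≤ K.dist x y := (dist_le q).trans (hq.trans hp.le)
  have hge : K.dist x y ≤ (K.deleteEdges {e}).dist x y :=
    q.reachable.dist_anti (K.deleteEdges_le _)
  exact h.elim (· q.reachable) (· (le_antisymm hle hge))

end SimpleGraph

lemma isMEGSet_univ {V : Type*} (G : SimpleGraph V) : IsMEGSet G Set.univ := by
  intro e he
  induction e with
  | h x y => exact ⟨x, trivial, y, trivial, monitors_of_adj he⟩

lemma meg_le_meg_of_forall_isMEGSet {V : Type*} [Fintype V] {G G' : SimpleGraph V}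
    (h : ∀ S, IsMEGSet G S → IsMEGSet G' S) : meg G' ≤ meg G :=
  csInf_le_csInf (OrderBot.bddBelow _) ⟨_, Set.univ, isMEGSet_univ G, rfl⟩
    fun _ ⟨S, hS, hcard⟩ => ⟨S, h S hS, hcard⟩

lemma IsMEGSet.of_le_of_hasShortDetours {V : Type*} {G G' : SimpleGraph V} {S : Set V}
    (hS : IsMEGSet G S) (hle : G' ≤ G) (hG : G.Preconnected)
    (hdetour : ∀ e ∈ G'.edgeSet, G.HasShortDetours e) : IsMEGSet G' S := by
  intro e he
  obtain ⟨x, hx, y, hy, hmon⟩ := hS e (edgeSet_subset_edgeSet.2 hle he)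
  have hxy : s(x, y) = e := (hdetour e he).eq_of_monitors (hG x y) hmon
  subst hxy
  exact ⟨x, hx, y, hy, monitors_of_adj he⟩

section Products

variable {V W : Type*} {G : SimpleGraph V} {H : SimpleGraph W}

lemma boxProd_le_strongProd : (G □ H) ≤ (G ⊠ H) := by
  intro x y h
  rcases boxProd_adj.1 h with ⟨hG, h2⟩ | ⟨hH, h1⟩
  · exact Or.inr (Or.inl ⟨h2, hG⟩)
  · exact Or.inl ⟨h1, hH⟩

lemma exists_detour_strongProd (hG : ∀ a, ¬ G.IsIsolated a) (hH : ∀ b, ¬ H.IsIsolated b)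
    {p q w : V × W} (hpq : (G □ H).Adj p q) (hqw : (G ⊠ H).Adj q w) :
    ∃ r : ((G ⊠ H).deleteEdges {s(p, q)}).Walk p w, r.length ≤ 2 := by
  obtain ⟨a, b⟩ := p
  obtain ⟨a', b'⟩ := q
  obtain ⟨c, d⟩ := w
  rcases boxProd_adj.1 hpq with ⟨ha, hbb⟩ | ⟨hb, haa⟩
  · dsimp only at ha hbb
    subst hbb
    rcases hqw with ⟨rfl, hd⟩ | ⟨rfl, hc⟩ | ⟨hc, hd⟩
    · refine exists_walk_deleteEdges_length_le_two (z := (a, d))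
        (Or.inl ⟨rfl, hd⟩) (Or.inr (Or.inl ⟨rfl, ha⟩)) ?_
      simp [Prod.ext_iff, hd.ne']
    · obtain ⟨b', hb'⟩ := exists_adj_iff_not_isIsolated.2 (hH b)
      refine exists_walk_deleteEdges_length_le_two (z := (a', b'))
        (Or.inr (Or.inr ⟨ha, hb'⟩)) (Or.inr (Or.inr ⟨hc, hb'.symm⟩)) ?_
      simp [Prod.ext_iff, hb'.ne']
    · refine exists_walk_deleteEdges_length_le_two (z := (a', d))
        (Or.inr (Or.inr ⟨ha, hd⟩)) (Or.inr (Or.inl ⟨rfl, hc⟩)) ?_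
      simp [Prod.ext_iff, hd.ne']
  · dsimp only at hb haa
    subst haa
    rcases hqw with ⟨rfl, hd⟩ | ⟨rfl, hc⟩ | ⟨hc, hd⟩
    · obtain ⟨a', ha'⟩ := exists_adj_iff_not_isIsolated.2 (hG a)
      refine exists_walk_deleteEdges_length_le_two (z := (a', b'))
        (Or.inr (Or.inr ⟨ha', hb⟩)) (Or.inr (Or.inr ⟨ha'.symm, hd⟩)) ?_
      simp [Prod.ext_iff, ha'.ne']
    · refine exists_walk_deleteEdges_length_le_two (z := (c, b))
        (Or.inr (Or.inl ⟨rfl, hc⟩)) (Or.inl ⟨rfl, hb⟩) ?_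
      simp [Prod.ext_iff, hc.ne']
    · refine exists_walk_deleteEdges_length_le_two (z := (c, b'))
        (Or.inr (Or.inr ⟨hc, hb⟩)) (Or.inl ⟨rfl, hd⟩) ?_
      simp [Prod.ext_iff, hc.ne']

lemma hasShortDetours_strongProd (hG : ∀ a, ¬ G.IsIsolated a) (hH : ∀ b, ¬ H.IsIsolated b)
    {e : Sym2 (V × W)} (he : e ∈ (G □ H).edgeSet) : (G ⊠ H).HasShortDetours e := by
  rintro p q w rfl hqw
  exact exists_detour_strongProd hG hH he hqw

end Products

theorem isMEGSet_strongProd_isMEGSet_boxProd {V W : Type*} [Fintype V] [Fintype W]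
    (G : SimpleGraph V) (H : SimpleGraph W)
    (hG : G.Connected) (hH : H.Connected)
    (hV : 1 < Fintype.card V) (hW : 1 < Fintype.card W) :
    (∀ S : Set (V × W), IsMEGSet (G ⊠ H) S → IsMEGSet (G □ H) S) ∧
      meg (G □ H) ≤ meg (G ⊠ H) := by
  have : Nontrivial V := Fintype.one_lt_card_iff_nontrivial.1 hV
  have : Nontrivial W := Fintype.one_lt_card_iff_nontrivial.1 hW
  have hconn : (G ⊠ H).Connected := (connected_boxProd.2 ⟨hG, hH⟩).mono boxProd_le_strongProd
  have hdetour : ∀ e ∈ (G □ H).edgeSet, (G ⊠ H).HasShortDetours e := fun _ =>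
    hasShortDetours_strongProd hG.preconnected.not_isIsolated hH.preconnected.not_isIsolated
  have key : ∀ S, IsMEGSet (G ⊠ H) S → IsMEGSet (G □ H) S := fun _ hS =>
    hS.of_le_of_hasShortDetours boxProd_le_strongProd hconn.preconnected hdetour
  exact ⟨key, meg_le_meg_of_forall_isMEGSet key⟩
end

section
/- Let G and H be finite connected simple graphs, and let (a,b), (c,d) ∈ V(G) × V(H) with a ≠ c and b ≠ d. Then for every edge e of the Cartesian product G □ H, the distance between (a,b) and (c,d) in (G □ H) − e equals the distance between (a,b) and (c,d) in G □ H; equivalently, there exist two edge-disjoint shortest paths from (a,b) to (c,d) in G □ H. -/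
/-! Choose shortest walks `p` from `a` to `c` in `G` and `q` from `b` to `d` in `H`. Since
distances add in a Cartesian product, the two "L-shaped" walks that traverse `p` in row `b` and
then `q` in column `c`, respectively `q` in column `a` and then `p` in row `d`, are geodesics.
For `a ≠ c` and `b ≠ d` they share no edge, so every edge misses one of them. -/

open SimpleGraph

infixl:70 " ⊠ " => strongProd

namespace SimpleGraph

variable {α β : Type*} {G : SimpleGraph α} {H : SimpleGraph β}

lemma dist_boxProd {x y : α × β} (hG : G.Reachable x.1 y.1) (hH : H.Reachable x.2 y.2) :
    (G □ H).dist x y = G.dist x.1 y.1 + H.dist x.2 y.2 := by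
  rw [dist, dist, dist, edist_boxProd, ENat.toNat_add (edist_ne_top_iff_reachable.mpr hG)
    (edist_ne_top_iff_reachable.mpr hH)]

namespace Walk

lemma dist_deleteEdges_singleton_eq {u v : α} {e : Sym2 α} (w : G.Walk u v)
    (hw : w.length = G.dist u v) (he : e ∉ w.edges) :
    (G.deleteEdges {e}).dist u v = G.dist u v := by
  let w' := w.toDeleteEdge e he
  refine le_antisymm ?_ (w'.reachable.dist_anti (G.deleteEdges_le _))
  calc (G.deleteEdges {e}).dist u v ≤ w'.length := dist_le w'
    _ = G.dist u v := by rw [← hw, length_transfer]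

lemma snd_eq_of_mem_edges_boxProdLeft {a₁ a₂ : α} {b : β} (r : G.Walk a₁ a₂)
    {e : Sym2 (α × β)} (he : e ∈ (r.boxProdLeft H b).edges) {z : α × β} (hz : z ∈ e) :
    z.2 = b := by
  obtain ⟨⟨x, y⟩, -, rfl⟩ := List.mem_map.mp (edges_map _ r ▸ he)
  simp only [Sym2.map_mk, Sym2.mem_iff] at hz
  rcases hz with rfl | rfl <;> rfl

lemma fst_eq_of_mem_edges_boxProdRight {a : α} {b₁ b₂ : β} (r : H.Walk b₁ b₂)
    {e : Sym2 (α × β)} (he : e ∈ (r.boxProdRight G a).edges) {z : α × β} (hz : z ∈ e) :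
    z.1 = a := by
  obtain ⟨⟨x, y⟩, -, rfl⟩ := List.mem_map.mp (edges_map _ r ▸ he)
  simp only [Sym2.map_mk, Sym2.mem_iff] at hz
  rcases hz with rfl | rfl <;> rfl

@[simp]
lemma length_boxProdLeft {a₁ a₂ : α} (b : β) (p : G.Walk a₁ a₂) :
    (p.boxProdLeft H b).length = p.length :=
  length_map _ p

@[simp]
lemma length_boxProdRight (a : α) {b₁ b₂ : β} (q : H.Walk b₁ b₂) :
    (q.boxProdRight G a).length = q.length :=
  length_map _ q

lemma disjoint_edges_boxProdLeft_append_boxProdRight {a c : α} {b d : β} (p : G.Walk a c)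
    (q : H.Walk b d) (hac : a ≠ c) (hbd : b ≠ d) :
    ((p.boxProdLeft H b).append (q.boxProdRight G c)).edges.Disjoint
      ((q.boxProdRight G a).append (p.boxProdLeft H d)).edges := by
  rintro ⟨u, v⟩ h₁ h₂
  have hdiag := (G □ H).not_isDiag_of_mem_edgeSet (edges_subset_edgeSet _ h₁)
  have hu : u ∈ s(u, v) := Sym2.mem_mk_left u v
  have hv : v ∈ s(u, v) := Sym2.mem_mk_right u v
  rw [Sym2.mk_isDiag_iff] at hdiag
  rw [edges_append, List.mem_append] at h₁ h₂
  rcases h₁ with h₁ | h₁ <;> rcases h₂ with h₂ | h₂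
  · exact hdiag (Prod.ext
      ((fst_eq_of_mem_edges_boxProdRight q h₂ hu).trans
        (fst_eq_of_mem_edges_boxProdRight q h₂ hv).symm)
      ((snd_eq_of_mem_edges_boxProdLeft p h₁ hu).trans
        (snd_eq_of_mem_edges_boxProdLeft p h₁ hv).symm))
  · exact hbd ((snd_eq_of_mem_edges_boxProdLeft p h₁ hu).symm.trans
      (snd_eq_of_mem_edges_boxProdLeft p h₂ hu))
  · exact hac ((fst_eq_of_mem_edges_boxProdRight q h₂ hu).symm.trans
      (fst_eq_of_mem_edges_boxProdRight q h₁ hu))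
  · exact hdiag (Prod.ext
      ((fst_eq_of_mem_edges_boxProdRight q h₁ hu).trans
        (fst_eq_of_mem_edges_boxProdRight q h₁ hv).symm)
      ((snd_eq_of_mem_edges_boxProdLeft p h₂ hu).trans
        (snd_eq_of_mem_edges_boxProdLeft p h₂ hv).symm))

end Walk

end SimpleGraph

theorem boxProd_dist_deleteEdges_eq_general {V W : Type*}
    (G : SimpleGraph V) (H : SimpleGraph W)
    (hG : G.Connected) (hH : H.Connected)
    (a c : V) (b d : W) (hac : a ≠ c) (hbd : b ≠ d) :
    ∀ e ∈ (G □ H).edgeSet,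
      ((G □ H).deleteEdges {e}).dist (a, b) (c, d) = (G □ H).dist (a, b) (c, d) := by
  intro e _
  obtain ⟨p, hp⟩ := hG.exists_walk_length_eq_dist a c
  obtain ⟨q, hq⟩ := hH.exists_walk_length_eq_dist b d
  have hdist : (G □ H).dist (a, b) (c, d) = G.dist a c + H.dist b d :=
    dist_boxProd (hG.preconnected a c) (hH.preconnected b d)
  by_cases he : e ∈ ((p.boxProdLeft H b).append (q.boxProdRight G c)).edges
  · refine Walk.dist_deleteEdges_singleton_eq _ ?_
      (Walk.disjoint_edges_boxProdLeft_append_boxProdRight p q hac hbd he)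
    simp [hdist, hp, hq, add_comm]
  · refine Walk.dist_deleteEdges_singleton_eq _ ?_ he
    simp [hdist, hp, hq]

theorem boxProd_dist_deleteEdges_eq {V W : Type*} [Fintype V] [Fintype W]
    (G : SimpleGraph V) (H : SimpleGraph W)
    (hG : G.Connected) (hH : H.Connected)
    (a c : V) (b d : W) (hac : a ≠ c) (hbd : b ≠ d) :
    ∀ e ∈ (G □ H).edgeSet,
      ((G □ H).deleteEdges {e}).dist (a, b) (c, d) = (G □ H).dist (a, b) (c, d) :=
  boxProd_dist_deleteEdges_eq_general G H hG hH a c b d hac hbd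
end
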